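/- arXiv:2512.00757 — 3 statements merged into one kernel-verified Lean document; each statement's English description precedes it below -/
import Mathlib

section
/- Consider a nonnegative sequence {y_t} satisfying y_{t+1} ≤ (1-α)y_t + b_t where 0 < α < 1 and b_t ≤ B·t^{-β} for constants B > 0, β > 0 (for t ≥ 1). Then there exists a constant C > 0 such that y_t ≤ C·max((1-α)^{t/2}, t^{-β}) for all t ≥ 1. -/
/-- Linear comparison lemma: `y_{t+1} ≤ (1-α) y_t + b_t` with `b_t ≤ B t^{-β}` implies
`y_t ≤ C max((1-α)^{t/2}, t^{-β})`. -/
theorem linear_comparison_rate (y b : ℕ → ℝ) (α β B : ℝ)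
    (hy : ∀ t, 0 ≤ y t)
    (hα : 0 < α) (hα1 : α < 1) (hB : 0 < B) (hβ : 0 < β)
    (hb : ∀ t : ℕ, 1 ≤ t → b t ≤ B * (t : ℝ) ^ (-β))
    (hbnn : ∀ t, 0 ≤ b t)
    (hrec : ∀ t, y (t + 1) ≤ (1 - α) * y t + b t) :
    ∃ C > 0, ∀ t : ℕ, 1 ≤ t →
      y t ≤ C * max ((1 - α) ^ ((t : ℝ) / 2)) ((t : ℝ) ^ (-β)) := by
  set r := 1 - α with hrdef
  have hr0 : (0:ℝ) < r := by simp [hrdef]; linarith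
  have hr1 : r < 1 := by simp [hrdef]; linarith
  set q := Real.sqrt r with hqdef
  have hq0 : 0 < q := Real.sqrt_pos.2 hr0
  have hq1 : q < 1 := by
    rw [hqdef, show (1:ℝ) = Real.sqrt 1 by simp]
    exact Real.sqrt_lt_sqrt hr0.le hr1
  have hqq : q * q = r := Real.mul_self_sqrt hr0.le
  -- threshold T
  have h1q : 1 < 1/q := by rw [lt_div_iff₀ hq0]; linarith
  have hρ1 : 1 < (1/q : ℝ) ^ (1/β : ℝ) :=
    (Real.one_lt_rpow_iff_of_pos (by positivity)).2 (Or.inl ⟨h1q, by positivity⟩)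
  set δ := (1/q : ℝ) ^ (1/β : ℝ) - 1 with hδdef
  have hδ0 : 0 < δ := by simp only [hδdef]; linarith
  obtain ⟨N, hN⟩ := exists_nat_gt (1/δ)
  set T := max N 1 with hTdef
  have hT1 : 1 ≤ T := le_max_right _ _
  -- for t ≥ T, (t+1)^β ≤ t^β / q
  have hTfact : ∀ t : ℕ, T ≤ t → ((t:ℝ)+1) ^ β ≤ (t:ℝ) ^ β / q := by
    intro t ht
    have ht0 : (0:ℝ) < t := by
      have : 1 ≤ t := le_trans hT1 ht
      exact_mod_cast this
    have hNt : (1/δ) < (t:ℝ) := by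
      refine lt_of_lt_of_le hN ?_
      exact_mod_cast le_trans (le_max_left N 1) ht
    have h1 : (t:ℝ) + 1 ≤ (t:ℝ) * ((1/q : ℝ) ^ (1/β : ℝ)) := by
      have h2 : 1 < δ * t := by
        rw [← div_lt_iff₀' hδ0]; exact hNt
      have : (t:ℝ) * ((1/q : ℝ) ^ (1/β : ℝ)) = t * (1 + δ) := by
        simp only [hδdef]; ring
      rw [this]; nlinarith
    calc ((t:ℝ)+1) ^ β ≤ ((t:ℝ) * ((1/q : ℝ) ^ (1/β : ℝ))) ^ β :=
          Real.rpow_le_rpow (by positivity) h1 hβ.le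
      _ = (t:ℝ) ^ β * ((1/q : ℝ) ^ (1/β : ℝ)) ^ β :=
          Real.mul_rpow ht0.le (by positivity)
      _ = (t:ℝ) ^ β * (1/q) := by
          rw [← Real.rpow_mul (by positivity), one_div β, inv_mul_cancel₀ hβ.ne',
            Real.rpow_one]
      _ = (t:ℝ) ^ β / q := by ring
  -- the comparison function
  set M : ℕ → ℝ := fun t => max (r ^ ((t:ℝ) / 2)) ((t:ℝ) ^ (-β)) with hMdef
  have hMpos : ∀ t, 0 < M t := fun t =>
    lt_max_of_lt_left (Real.rpow_pos_of_pos hr0 _)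
  -- Claim A: contraction of M past T
  have hA : ∀ t : ℕ, T ≤ t → r * M t ≤ q * M (t+1) := by
    intro t ht
    have ht0 : (0:ℝ) < t := by
      have : 1 ≤ t := le_trans hT1 ht
      exact_mod_cast this
    have hcast : ((t+1 : ℕ):ℝ) = (t:ℝ) + 1 := by push_cast; ring
    have hA1 : r * r ^ ((t:ℝ)/2) ≤ q * r ^ (((t:ℝ)+1)/2) := by
      have : r * r ^ ((t:ℝ)/2) = r ^ ((1:ℝ)/2) * r ^ (((t:ℝ)+1)/2) := by
        calc r * r ^ ((t:ℝ)/2) = r ^ (1:ℝ) * r ^ ((t:ℝ)/2) := by rw [Real.rpow_one]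
          _ = r ^ (1 + (t:ℝ)/2) := (Real.rpow_add hr0 _ _).symm
          _ = r ^ ((1:ℝ)/2 + ((t:ℝ)+1)/2) := by ring_nf
          _ = r ^ ((1:ℝ)/2) * r ^ (((t:ℝ)+1)/2) := Real.rpow_add hr0 _ _
      rw [this, hqdef, ← Real.sqrt_eq_rpow]
    have hA2 : r * (t:ℝ) ^ (-β) ≤ q * ((t:ℝ)+1) ^ (-β) := by
      have htβ : (0:ℝ) < (t:ℝ) ^ β := Real.rpow_pos_of_pos ht0 _
      have ht1β : (0:ℝ) < ((t:ℝ)+1) ^ β := Real.rpow_pos_of_pos (by linarith) _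
      rw [Real.rpow_neg ht0.le, Real.rpow_neg (by linarith : (0:ℝ) ≤ (t:ℝ)+1),
        ← one_div, ← one_div, mul_one_div, mul_one_div, div_le_div_iff₀ htβ ht1β]
      have h3 := hTfact t ht
      calc r * ((t:ℝ)+1) ^ β ≤ r * ((t:ℝ) ^ β / q) := by nlinarith
        _ = q * (t:ℝ) ^ β := by
            field_simp
            nlinarith
    calc r * M t = max (r * r ^ ((t:ℝ)/2)) (r * (t:ℝ) ^ (-β)) := by
          rw [hMdef]; exact mul_max_of_nonneg _ _ hr0.le
      _ ≤ max (q * r ^ (((t:ℝ)+1)/2)) (q * ((t:ℝ)+1) ^ (-β)) := max_le_max hA1 hA2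
      _ = q * M (t+1) := by
          rw [hMdef]; simp only [hcast]
          exact (mul_max_of_nonneg _ _ hq0.le).symm
  -- Claim B: polynomial term
  have hB2 : ∀ t : ℕ, 1 ≤ t → (t:ℝ) ^ (-β) ≤ (2:ℝ) ^ β * M (t+1) := by
    intro t ht
    have ht0 : (0:ℝ) < t := by exact_mod_cast ht
    have ht1 : (1:ℝ) ≤ t := by exact_mod_cast ht
    have h2β : (0:ℝ) < (2:ℝ) ^ β := Real.rpow_pos_of_pos (by norm_num) _
    have htβ : (0:ℝ) < (t:ℝ) ^ β := Real.rpow_pos_of_pos ht0 _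
    have ht1β : (0:ℝ) < ((t:ℝ)+1) ^ β := Real.rpow_pos_of_pos (by linarith) _
    have hcast : ((t+1 : ℕ):ℝ) = (t:ℝ) + 1 := by push_cast; ring
    have hkey : ((t:ℝ)+1) ^ β ≤ (2:ℝ) ^ β * (t:ℝ) ^ β := by
      calc ((t:ℝ)+1) ^ β ≤ ((2:ℝ) * t) ^ β := by
            apply Real.rpow_le_rpow (by linarith) (by linarith) hβ.le
        _ = (2:ℝ) ^ β * (t:ℝ) ^ β := Real.mul_rpow (by norm_num) ht0.le
    have hstep : (t:ℝ) ^ (-β) ≤ (2:ℝ) ^ β * ((t:ℝ)+1) ^ (-β) := by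
      rw [Real.rpow_neg ht0.le, Real.rpow_neg (by linarith : (0:ℝ) ≤ (t:ℝ)+1),
        inv_eq_one_div, ← div_eq_mul_inv, div_le_div_iff₀ htβ ht1β]
      linarith
    refine le_trans hstep ?_
    have : ((t:ℝ)+1) ^ (-β) ≤ M (t+1) := by
      rw [hMdef]; simp only [hcast]; exact le_max_right _ _
    exact mul_le_mul_of_nonneg_left this h2β.le
  -- constant on the initial segment
  set C0 : ℝ := (Finset.range (T+1)).sup' ⟨0, by simp⟩ (fun t => y t / M t) with hC0def
  have hC0 : ∀ t : ℕ, t ≤ T → y t ≤ C0 * M t := by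
    intro t ht
    have hmem : t ∈ Finset.range (T+1) := Finset.mem_range.2 (Nat.lt_succ_of_le ht)
    have h1 : y t / M t ≤ C0 := by
      rw [hC0def]; exact Finset.le_sup' (fun t => y t / M t) hmem
    have h2 : y t = (y t / M t) * M t := by field_simp [(hMpos t).ne']
    rw [h2]
    exact mul_le_mul_of_nonneg_right h1 (hMpos t).le
  -- the final constant
  have h2β : (0:ℝ) < (2:ℝ) ^ β := Real.rpow_pos_of_pos (by norm_num) _
  set C : ℝ := max C0 (B * (2:ℝ) ^ β / (1-q)) with hCdef
  have hCpos : 0 < C :=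
    lt_of_lt_of_le (div_pos (by positivity) (by linarith)) (le_max_right _ _)
  have hCgeo : B * (2:ℝ) ^ β ≤ C * (1-q) := by
    have h1 : B * (2:ℝ) ^ β / (1-q) ≤ C := le_max_right _ _
    rw [div_le_iff₀ (by linarith : (0:ℝ) < 1-q)] at h1
    linarith
  have hC0C : C0 ≤ C := le_max_left _ _
  -- main induction
  have key : ∀ t : ℕ, T ≤ t → y t ≤ C * M t := by
    intro t ht
    induction t, ht using Nat.le_induction with
    | base =>
      exact le_trans (hC0 T le_rfl) (mul_le_mul_of_nonneg_right hC0C (hMpos T).le)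
    | succ t ht ih =>
      have ht1 : 1 ≤ t := le_trans hT1 ht
      calc y (t+1) ≤ r * y t + b t := hrec t
        _ ≤ r * (C * M t) + B * (t:ℝ) ^ (-β) :=
            add_le_add (mul_le_mul_of_nonneg_left ih hr0.le) (hb t ht1)
        _ = C * (r * M t) + B * (t:ℝ) ^ (-β) := by ring
        _ ≤ C * (q * M (t+1)) + B * ((2:ℝ) ^ β * M (t+1)) :=
            add_le_add (mul_le_mul_of_nonneg_left (hA t ht) hCpos.le)
              (mul_le_mul_of_nonneg_left (hB2 t ht1) hB.le)
        _ = (C * q + B * (2:ℝ) ^ β) * M (t+1) := by ring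
        _ ≤ C * M (t+1) :=
            mul_le_mul_of_nonneg_right (by linarith) (hMpos (t+1)).le
  refine ⟨C, hCpos, ?_⟩
  intro t ht
  show y t ≤ C * M t
  rcases le_or_gt t T with h | h
  · exact le_trans (hC0 t h) (mul_le_mul_of_nonneg_right hC0C (hMpos t).le)
  · exact key t h.le
end

section
/- Let p > 1, c > 0, γ = min(1/(p-1), β/p) with β > 0, and suppose a nonnegative sequence {y_t} satisfies y_{t+1} ≤ y_t - c·y_t^p + B·t^{-β} for t ≥ N₀, with y_{N₀} ≤ A·N₀^{-γ} for a sufficiently large constant A (depending on c, B, p, β, γ). Then y_t ≤ A·t^{-γ} for all t ≥ N₀ (for N₀ sufficiently large). -/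
/-!
The map `f x = x - c xᵖ` is increasing on `[0, (c p)^(-1/(p-1))]`, so once the barrier
`u t = A t^(-γ)` has entered that interval, `y t ≤ u t` propagates by induction provided
`f (u t) + B t^(-β) ≤ u (t + 1)`. Since `γ p ≤ β` and `γ p ≤ γ + 1`, all error terms are
`O(t^(-γ p))`; the convexity bound `(t + 1)^(-γ) ≥ t^(-γ) - γ t^(-γ-1)` then reduces the barrier
inequality to `c Aᵖ ≥ B + A γ`.
-/

open Real Filter Set

theorem one_sub_mul_le_rpow_neg {γ x : ℝ} (hγ : 0 ≤ γ) (hx : 0 < x) :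
    1 - γ * (x - 1) ≤ x ^ (-γ) := by
  have hlog : γ * log x ≤ γ * (x - 1) := mul_le_mul_of_nonneg_left (log_le_sub_one_of_pos hx) hγ
  calc 1 - γ * (x - 1) ≤ log x * -γ + 1 := by linarith
    _ ≤ x ^ (-γ) := by rw [rpow_def_of_pos hx]; exact add_one_le_exp _

theorem rpow_neg_sub_mul_le_rpow_neg_add_one {γ T : ℝ} (hγ : 0 ≤ γ) (hT : 0 < T) :
    T ^ (-γ) - γ * T ^ (-(γ + 1)) ≤ (T + 1) ^ (-γ) := by
  have hsplit : T + 1 = T * (1 + T⁻¹) := by field_simp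
  have hpow : T ^ (-(γ + 1)) = T ^ (-γ) * T⁻¹ := by
    rw [neg_add, rpow_add hT, rpow_neg_one]
  rw [hsplit, mul_rpow hT.le (by positivity), hpow]
  calc T ^ (-γ) - γ * (T ^ (-γ) * T⁻¹) = T ^ (-γ) * (1 - γ * ((1 + T⁻¹) - 1)) := by ring
    _ ≤ T ^ (-γ) * (1 + T⁻¹) ^ (-γ) :=
      mul_le_mul_of_nonneg_left (one_sub_mul_le_rpow_neg hγ (by positivity)) (by positivity)

theorem monotoneOn_sub_mul_rpow {p c : ℝ} (hp : 1 < p) (hc : 0 < c) :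
    MonotoneOn (fun x => x - c * x ^ p) (Icc 0 ((c * p) ^ (-(1 / (p - 1))))) := by
  have hder : ∀ x : ℝ, HasDerivAt (fun x => x - c * x ^ p) (1 - c * (p * x ^ (p - 1))) x :=
    fun x => (hasDerivAt_id x).sub ((hasDerivAt_rpow_const (Or.inr hp.le)).const_mul c)
  have hcp : 0 < c * p := by positivity
  refine monotoneOn_of_deriv_nonneg (convex_Icc _ _)
    (fun x _ => (hder x).continuousAt.continuousWithinAt)
    (fun x _ => (hder x).differentiableAt.differentiableWithinAt) fun x hx => ?_
  rw [interior_Icc] at hx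
  have hcrit : ((c * p) ^ (-(1 / (p - 1)))) ^ (p - 1) = (c * p)⁻¹ := by
    rw [← rpow_mul hcp.le, show -(1 / (p - 1)) * (p - 1) = -1 by field_simp [(sub_pos.2 hp).ne'], rpow_neg_one]
  have hx' : x ^ (p - 1) ≤ (c * p)⁻¹ :=
    hcrit ▸ rpow_le_rpow hx.1.le hx.2.le (by linarith)
  have : c * p * x ^ (p - 1) ≤ 1 := by
    calc c * p * x ^ (p - 1) ≤ c * p * (c * p)⁻¹ := mul_le_mul_of_nonneg_left hx' hcp.le
      _ = 1 := mul_inv_cancel₀ hcp.ne'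
  rw [(hder x).deriv]
  linarith

theorem le_of_monotoneOn_recurrence {f : ℝ → ℝ} {a m : ℝ} (hf : MonotoneOn f (Icc a m))
    {y u b : ℕ → ℝ} {N : ℕ} (hy : ∀ t, N ≤ t → a ≤ y t) (hu : ∀ t, N ≤ t → u t ∈ Icc a m)
    (hy_rec : ∀ t, N ≤ t → y (t + 1) ≤ f (y t) + b t)
    (hu_rec : ∀ t, N ≤ t → f (u t) + b t ≤ u (t + 1)) (hN : y N ≤ u N) :
    ∀ t, N ≤ t → y t ≤ u t := by
  intro t ht
  induction t, ht using Nat.le_induction with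
  | base => exact hN
  | succ t ht ih =>
    have hyu : f (y t) ≤ f (u t) := hf ⟨hy t ht, ih.trans (hu t ht).2⟩ (hu t ht) ih
    linarith [hy_rec t ht, hu_rec t ht]

theorem sub_mul_rpow_add_le_rpow_neg_add_one {p c B β γ A T : ℝ} (hB : 0 ≤ B) (hγ : 0 ≤ γ)
    (hγ_one : γ * (p - 1) ≤ 1) (hγ_β : γ * p ≤ β) (hA : 0 ≤ A) (hAbig : B + A * γ ≤ c * A ^ p)
    (hT : 1 ≤ T) :
    A * T ^ (-γ) - c * (A * T ^ (-γ)) ^ p + B * T ^ (-β) ≤ A * (T + 1) ^ (-γ) := by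
  have hT0 : 0 < T := by linarith
  have hpow : (A * T ^ (-γ)) ^ p = A ^ p * T ^ (-(γ * p)) := by
    rw [mul_rpow hA (rpow_nonneg hT0.le _), ← rpow_mul hT0.le, neg_mul]
  have hβ_le : T ^ (-β) ≤ T ^ (-(γ * p)) := rpow_le_rpow_of_exponent_le hT (by linarith)
  have hγ_le : T ^ (-(γ + 1)) ≤ T ^ (-(γ * p)) := rpow_le_rpow_of_exponent_le hT (by linarith)
  have hstep := rpow_neg_sub_mul_le_rpow_neg_add_one hγ hT0
  have hT_pos : 0 ≤ T ^ (-(γ * p)) := rpow_nonneg hT0.le _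
  rw [hpow]
  calc A * T ^ (-γ) - c * (A ^ p * T ^ (-(γ * p))) + B * T ^ (-β)
      ≤ A * T ^ (-γ) - (B + A * γ) * T ^ (-(γ * p)) + B * T ^ (-(γ * p)) := by
        linarith [mul_le_mul_of_nonneg_right hAbig hT_pos, mul_le_mul_of_nonneg_left hβ_le hB]
    _ = A * T ^ (-γ) - A * γ * T ^ (-(γ * p)) := by ring
    _ ≤ A * (T ^ (-γ) - γ * T ^ (-(γ + 1))) := by
        linarith [mul_le_mul_of_nonneg_left hγ_le (mul_nonneg hA hγ)]
    _ ≤ A * (T + 1) ^ (-γ) := mul_le_mul_of_nonneg_left hstep hA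

/-- Polynomial comparison lemma (induction step): for `N₀` sufficiently large,
if `y_{t+1} ≤ y_t - c y_t^p + B t^{-β}` for `t ≥ N₀` and `y_{N₀} ≤ A N₀^{-γ}` with
`A` large enough (`c A^p ≥ B + A γ`), then `y_t ≤ A t^{-γ}` for all `t ≥ N₀`,
where `γ = min(1/(p-1), β/p)`. -/
theorem polynomial_comparison (p c B β A : ℝ)
    (hp : 1 < p) (hc : 0 < c) (hB : 0 < B) (hβ : 0 < β) (hA : 0 < A)
    (hAbig : c * A ^ p ≥ B + A * min (1 / (p - 1)) (β / p)) :
    ∃ N₁ : ℕ, ∀ N₀ : ℕ, N₁ ≤ N₀ →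
      ∀ y : ℕ → ℝ, (∀ t, 0 ≤ y t) →
      (∀ t : ℕ, N₀ ≤ t → y (t + 1) ≤ y t - c * y t ^ p + B * (t : ℝ) ^ (-β)) →
      y N₀ ≤ A * (N₀ : ℝ) ^ (-(min (1 / (p - 1)) (β / p))) →
      ∀ t : ℕ, N₀ ≤ t → y t ≤ A * (t : ℝ) ^ (-(min (1 / (p - 1)) (β / p))) := by
  set γ := min (1 / (p - 1)) (β / p)
  have hp₀ : 0 < p := by linarith
  have hp₁ : 0 < p - 1 := by linarith
  have hγ : 0 < γ := lt_min (by positivity) (by positivity)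
  have hγ_one : γ * (p - 1) ≤ 1 := (le_div_iff₀ hp₁).1 (min_le_left _ _)
  have hγ_β : γ * p ≤ β := (le_div_iff₀ hp₀).1 (min_le_right _ _)
  have hsmall : ∀ᶠ t : ℕ in atTop, A * (t : ℝ) ^ (-γ) ≤ (c * p) ^ (-(1 / (p - 1))) := by
    have hlim := ((tendsto_rpow_neg_atTop hγ).const_mul A).comp tendsto_natCast_atTop_atTop
    rw [mul_zero] at hlim
    exact hlim.eventually (ge_mem_nhds (rpow_pos_of_pos (by positivity) _))
  obtain ⟨N₁, hN₁⟩ := eventually_atTop.1 (hsmall.and (eventually_ge_atTop 1))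
  refine ⟨N₁, fun N₀ hN₀ y hy hrec hinit => le_of_monotoneOn_recurrence
    (monotoneOn_sub_mul_rpow hp hc) (fun t _ => hy t)
    (fun t ht => ⟨by positivity, (hN₁ t (hN₀.trans ht)).1⟩) hrec (fun t ht => ?_) hinit⟩
  have hT : (1 : ℝ) ≤ t := by exact_mod_cast (hN₁ t (hN₀.trans ht)).2
  push_cast
  exact sub_mul_rpow_add_le_rpow_neg_add_one hB.le hγ.le hγ_one hγ_β hA.le hAbig hT
end

section
/- Consider the stochastic system e_{t+1} = A(e_t)e_t + ξ'_t with filtration F_t, where (i) E[ξ'_t | F_t] = 0 and E[ξ'ᵀ_t P ξ'_t | F_t] ≤ σ_t² a.s. with σ_t² → 0, (ii) there is a symmetric positive definite P and continuous c: ℝ^p → [0,1) with A(e)ᵀ P A(e) ⪯ (1-c(e))P for all e, and (iii) there is a convex f: ℝ_{≥0} → ℝ_{≥0} with f(0)=0, f(r)>0 for r>0, and c(e)V(e) ≥ f(V(e)) where V(e)=eᵀPe. Then for every δ > 0, limsup_{t→∞} P(‖e_t‖ > δ) = 0. -/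
open MeasureTheory Matrix Filter Topology

/-!
Write `V e = eᵀ P e` and `w t = 𝔼 V(e t)`. Young's inequality with weight `σ_t` bounds
`V(e (t+1))` by `(1 + σ_t) V(A(e t) e t) + (1 + σ_t⁻¹) V(ξ t)`, and the second term has expectation
at most `σ_t² + σ_t`. Convexity of `f` with `f 0 = 0` gives, at every level `a > 0`, a linear
minorant `f v ≥ K (v - a)` with `0 < K ≤ 1`, hence `V(A(e) e) ≤ (1 - K) V(e) + K a` and
`w (t+1) ≤ (1 + r t) ((1 - K) w t + K a) + s t` with `r t, s t → 0`. Such a perturbed contraction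
towards level `a` eventually keeps `w t ≤ 4 a`; as `a` is arbitrary, `w t → 0`, and Markov's
inequality together with `V e ≥ κ ‖e‖²` finishes the proof.
-/

namespace Matrix

variable {ι : Type*} [Fintype ι] {P : Matrix ι ι ℝ}

lemma PosSemidef.dotProduct_mulVec_self_nonneg (hP : P.PosSemidef) (x : ι → ℝ) :
    0 ≤ x ⬝ᵥ P *ᵥ x := by
  simpa using hP.dotProduct_mulVec_nonneg x

lemma continuous_dotProduct_mulVec_self : Continuous fun x : ι → ℝ => x ⬝ᵥ P *ᵥ x := by
  fun_prop

lemma PosSemidef.dotProduct_mulVec_add_le (hP : P.PosSemidef) {r : ℝ} (hr : 0 < r)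
    (u v : ι → ℝ) :
    (u + v) ⬝ᵥ P *ᵥ (u + v) ≤ (1 + r) * (u ⬝ᵥ P *ᵥ u) + (1 + r⁻¹) * (v ⬝ᵥ P *ᵥ v) := by
  have hT : Pᵀ = P := by simpa using hP.isHermitian.eq
  have hsymm : v ⬝ᵥ P *ᵥ u = u ⬝ᵥ P *ᵥ v := by
    rw [dotProduct_mulVec, ← mulVec_transpose, hT, dotProduct_comm]
  have h := hP.dotProduct_mulVec_self_nonneg (r • u - v)
  simp only [mulVec_add, mulVec_sub, mulVec_smul, dotProduct_add, add_dotProduct,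
    dotProduct_sub, sub_dotProduct, dotProduct_smul, smul_dotProduct, smul_eq_mul, hsymm] at h ⊢
  have hcross : r * (2 * (u ⬝ᵥ P *ᵥ v)) ≤ r * (r * (u ⬝ᵥ P *ᵥ u) + r⁻¹ * (v ⬝ᵥ P *ᵥ v)) := by
    rw [mul_add, ← mul_assoc r r⁻¹, mul_inv_cancel₀ hr.ne']
    linarith
  linarith [le_of_mul_le_mul_left hcross hr]

lemma PosDef.exists_pos_mul_sum_sq_le (hP : P.PosDef) :
    ∃ m > 0, ∀ x : ι → ℝ, m * ∑ i, x i ^ 2 ≤ x ⬝ᵥ P *ᵥ x := by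
  rcases isEmpty_or_nonempty ι with hι | hι
  · exact ⟨1, one_pos, fun x => by simp⟩
  let Q : EuclideanSpace ℝ ι → ℝ := fun y => y.ofLp ⬝ᵥ P *ᵥ y.ofLp
  have hQ : Continuous Q := continuous_dotProduct_mulVec_self.comp (PiLp.continuous_ofLp 2 _)
  obtain ⟨u, hu, hmin⟩ := (isCompact_sphere (0 : EuclideanSpace ℝ ι) 1).exists_isMinOn
    (NormedSpace.sphere_nonempty.2 zero_le_one) hQ.continuousOn
  have hu0 : u.ofLp ≠ 0 := by
    intro h
    simp [(WithLp.ofLp_eq_zero 2).1 h] at hu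
  refine ⟨Q u, by simpa using hP.dotProduct_mulVec_pos hu0, fun x => ?_⟩
  rcases eq_or_ne x 0 with rfl | hx
  · simp
  set y := WithLp.toLp 2 x
  have hy : ‖y‖ ≠ 0 := by simpa [y] using hx
  have hQy : Q (‖y‖⁻¹ • y) = (‖y‖ ^ 2)⁻¹ * (x ⬝ᵥ P *ᵥ x) := by
    simp [Q, y, mulVec_smul]; ring
  have hle := hmin (show ‖y‖⁻¹ • y ∈ Metric.sphere 0 1 by simp [norm_smul, hy])
  rw [Set.mem_ofPred_eq, hQy] at hle
  rw [← EuclideanSpace.real_norm_sq_eq y, mul_comm]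
  exact (le_inv_mul_iff₀ (by positivity)).1 hle

end Matrix

lemma ConvexOn.exists_mul_sub_le {f : ℝ → ℝ} (hf : ConvexOn ℝ (Set.Ici 0) f) (hf0 : f 0 = 0)
    (hfpos : ∀ r, 0 < r → 0 < f r) {a : ℝ} (ha : 0 < a) :
    ∃ K, 0 < K ∧ K ≤ 1 ∧ ∀ v, 0 ≤ v → K * (v - a) ≤ f v := by
  have hslope_pos : 0 < f a / a := div_pos (hfpos a ha) ha
  refine ⟨min (f a / a) 1, lt_min hslope_pos one_pos, min_le_right _ _, fun v hv => ?_⟩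
  rcases lt_or_ge v a with hva | hav
  · have hfv : 0 ≤ f v := hv.eq_or_lt.elim (fun h => h ▸ hf0.ge) fun h => (hfpos v h).le
    exact (mul_nonpos_of_nonneg_of_nonpos (le_min hslope_pos.le zero_le_one)
      (by linarith)).trans hfv
  · have hv0 : 0 < v := ha.trans_le hav
    have hslope : f a / a ≤ f v / v := by
      simpa [hf0] using hf.secant_mono Set.self_mem_Ici ha.le hv ha.ne' hv0.ne' hav
    calc min (f a / a) 1 * (v - a) ≤ f a / a * v :=
          mul_le_mul (min_le_left _ _) (by linarith) (by linarith) hslope_pos.le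
      _ ≤ f v / v * v := mul_le_mul_of_nonneg_right hslope hv
      _ = f v := div_mul_cancel₀ _ hv0.ne'

lemma eventually_le_of_affine_contraction {u : ℕ → ℝ} {q b η : ℝ} (hq0 : 0 ≤ q) (hq1 : q < 1)
    (hη : 0 < η) (h : ∀ᶠ t in atTop, u (t + 1) ≤ q * u t + b) :
    ∀ᶠ t in atTop, u t ≤ b / (1 - q) + η := by
  obtain ⟨T, hT⟩ := eventually_atTop.1 h
  set z := b / (1 - q)
  have hz : q * z + b = z := by
    simp only [z]; field_simp [(sub_pos.2 hq1).ne']; ring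
  have hgeom : ∀ k, u (T + k) - z ≤ q ^ k * max (u T - z) 0 := by
    intro k
    induction k with
    | zero => simp
    | succ k ih =>
      calc u (T + (k + 1)) - z ≤ q * (u (T + k) - z) := by
            rw [← add_assoc]; linarith [hT (T + k) (Nat.le_add_right T k)]
        _ ≤ q * (q ^ k * max (u T - z) 0) := mul_le_mul_of_nonneg_left ih hq0
        _ = q ^ (k + 1) * max (u T - z) 0 := by ring
  have hlim : Tendsto (fun k => q ^ k * max (u T - z) 0) atTop (𝓝 0) := by
    simpa using (tendsto_pow_atTop_nhds_zero_of_lt_one hq0 hq1).mul_const (max (u T - z) 0)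
  obtain ⟨N, hN⟩ := eventually_atTop.1 (hlim.eventually_lt_const hη)
  refine eventually_atTop.2 ⟨T + N, fun t ht => ?_⟩
  obtain ⟨k, rfl⟩ := Nat.exists_eq_add_of_le (le_of_add_le_left ht)
  linarith [hgeom k, hN k (by omega)]

lemma exists_eventually_le_of_perturbed_contraction {w r s : ℕ → ℝ} {K a : ℝ}
    (hw : ∀ t, 0 ≤ w t) (hr : Tendsto r atTop (𝓝 0)) (hs : Tendsto s atTop (𝓝 0))
    (hK0 : 0 < K) (hK1 : K ≤ 1) (ha : 0 ≤ a)
    (hrec : ∀ t, w (t + 1) ≤ (1 + r t) * ((1 - K) * w t + K * a) + s t) :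
    ∃ M, ∀ᶠ t in atTop, w t ≤ M := by
  refine ⟨_, eventually_le_of_affine_contraction (q := 1 - K / 2) (b := 2 * a + 1)
    (by linarith) (by linarith) one_pos ?_⟩
  filter_upwards [hr.eventually_le_const (half_pos hK0), hs.eventually_le_const one_pos]
    with t hrt hst
  have hX : 0 ≤ (1 - K) * w t + K * a := by nlinarith [hw t]
  have hKw : 0 ≤ K * K * w t := by have := hw t; positivity
  nlinarith [mul_le_mul_of_nonneg_right (add_le_add_left hrt 1) hX, hrec t]

lemma eventually_le_of_perturbed_contraction {w r s : ℕ → ℝ} {K a : ℝ} (hw : ∀ t, 0 ≤ w t)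
    (hr : Tendsto r atTop (𝓝 0)) (hs : Tendsto s atTop (𝓝 0)) (hK0 : 0 < K) (hK1 : K ≤ 1)
    (ha : 0 < a) (hrec : ∀ t, w (t + 1) ≤ (1 + r t) * ((1 - K) * w t + K * a) + s t) :
    ∀ᶠ t in atTop, w t ≤ 4 * a := by
  obtain ⟨M, hM⟩ := exists_eventually_le_of_perturbed_contraction hw hr hs hK0 hK1 ha.le hrec
  have hM0 : 0 ≤ M := by obtain ⟨t, ht⟩ := hM.exists; exact (hw t).trans ht
  have hMa : 0 < M + a := by linarith
  have hKa : 0 < K * a := mul_pos hK0 ha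
  have hcontr := eventually_le_of_affine_contraction (u := w) (q := 1 - K) (b := 3 * (K * a))
    (by linarith) (by linarith) ha ?_
  · filter_upwards [hcontr] with t ht
    rw [sub_sub_cancel, mul_div_assoc, mul_div_cancel_left₀ _ hK0.ne'] at ht
    linarith
  filter_upwards [hM, hr.eventually_le_const (div_pos hKa hMa), hs.eventually_le_const hKa]
    with t hwt hrt hst
  set X := (1 - K) * w t + K * a
  have hX0 : 0 ≤ X := by nlinarith [hw t]
  have hXM : X ≤ M + a := by nlinarith [hw t]
  have hrX : r t * X ≤ K * a :=
    calc r t * X ≤ K * a / (M + a) * (M + a) :=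
          mul_le_mul hrt hXM hX0 (div_pos hKa hMa).le
      _ = K * a := div_mul_cancel₀ _ hMa.ne'
  nlinarith [hrec t]

theorem tendsto_zero_of_perturbed_contraction {w r s : ℕ → ℝ} (hw : ∀ t, 0 ≤ w t)
    (hr : Tendsto r atTop (𝓝 0)) (hs : Tendsto s atTop (𝓝 0))
    (hrec : ∀ a > 0, ∃ K, 0 < K ∧ K ≤ 1 ∧
      ∀ t, w (t + 1) ≤ (1 + r t) * ((1 - K) * w t + K * a) + s t) :
    Tendsto w atTop (𝓝 0) := by
  refine tendsto_order.2 ⟨fun b hb => .of_forall fun t => hb.trans_le (hw t), fun b hb => ?_⟩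
  obtain ⟨K, hK0, hK1, hrecK⟩ := hrec (b / 5) (by positivity)
  filter_upwards [eventually_le_of_perturbed_contraction hw hr hs hK0 hK1 (by positivity) hrecK]
    with t ht
  linarith

section Probability

variable {Ω ι : Type*} [Fintype ι] {m m0 : MeasurableSpace Ω} {μ : Measure Ω}
  {P : Matrix ι ι ℝ}

lemma integral_le_of_ae_condExp_le [IsProbabilityMeasure μ] (hm : m ≤ m0) {g : Ω → ℝ} {s : ℝ}
    (h : ∀ᵐ ω ∂μ, μ[g | m] ω ≤ s) : ∫ ω, g ω ∂μ ≤ s := by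
  rw [← integral_condExp hm]
  calc ∫ ω, μ[g | m] ω ∂μ ≤ ∫ _, s ∂μ := integral_mono_ae integrable_condExp (integrable_const s) h
    _ = s := by simp

lemma integral_dotProduct_mulVec_add_le (hP : P.PosSemidef) {r : ℝ} (hr : 0 < r)
    {y ξ : Ω → ι → ℝ} {g : Ω → ℝ} (hyg : ∀ ω, y ω ⬝ᵥ P *ᵥ y ω ≤ g ω) (hg : Integrable g μ)
    (hξ : Measurable ξ) (hyξ : Integrable (fun ω => (y ω + ξ ω) ⬝ᵥ P *ᵥ (y ω + ξ ω)) μ) :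
    ∫ ω, (y ω + ξ ω) ⬝ᵥ P *ᵥ (y ω + ξ ω) ∂μ ≤
      (1 + r) * ∫ ω, g ω ∂μ + (1 + r⁻¹) * ∫ ω, ξ ω ⬝ᵥ P *ᵥ ξ ω ∂μ := by
  have hξint : Integrable (fun ω => ξ ω ⬝ᵥ P *ᵥ ξ ω) μ := by
    refine ((hyξ.const_mul 2).add (hg.const_mul 2)).mono'
      (continuous_dotProduct_mulVec_self.measurable.comp hξ).aestronglyMeasurable
      (.of_forall fun ω => ?_)
    have h := hP.dotProduct_mulVec_add_le one_pos (y ω + ξ ω) (-y ω)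
    rw [add_neg_cancel_comm, inv_one, one_add_one_eq_two] at h
    simp only [mulVec_neg, dotProduct_neg, neg_dotProduct, neg_neg] at h
    rw [Real.norm_of_nonneg (hP.dotProduct_mulVec_self_nonneg _)]
    show _ ≤ 2 * _ + 2 * g ω
    linarith [hyg ω]
  rw [← integral_const_mul, ← integral_const_mul, ← integral_add (hg.const_mul _)
    (hξint.const_mul _)]
  exact integral_mono hyξ ((hg.const_mul _).add (hξint.const_mul _)) fun ω =>
    (hP.dotProduct_mulVec_add_le hr _ _).trans (by gcongr; exact hyg ω)

lemma integral_lyapunov_succ_le [IsProbabilityMeasure μ] (hm : m ≤ m0) (hP : P.PosSemidef)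
    {A : (ι → ℝ) → Matrix ι ι ℝ} {x x' ξ : Ω → ι → ℝ} {K a σ : ℝ}
    (hdrift : ∀ v, (A v *ᵥ v) ⬝ᵥ P *ᵥ (A v *ᵥ v) ≤ (1 - K) * (v ⬝ᵥ P *ᵥ v) + K * a)
    (hdyn : ∀ ω, x' ω = A (x ω) *ᵥ x ω + ξ ω) (hξ : Measurable ξ) (hσ : 0 < σ)
    (hvar : ∀ᵐ ω ∂μ, μ[fun ω => ξ ω ⬝ᵥ P *ᵥ ξ ω | m] ω ≤ σ)
    (hx : Integrable (fun ω => x ω ⬝ᵥ P *ᵥ x ω) μ)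
    (hx' : Integrable (fun ω => x' ω ⬝ᵥ P *ᵥ x' ω) μ) :
    ∫ ω, x' ω ⬝ᵥ P *ᵥ x' ω ∂μ ≤
      (1 + √σ) * ((1 - K) * ∫ ω, x ω ⬝ᵥ P *ᵥ x ω ∂μ + K * a) + (σ + √σ) := by
  have hr : 0 < √σ := Real.sqrt_pos.2 hσ
  have hg : Integrable (fun ω => (1 - K) * (x ω ⬝ᵥ P *ᵥ x ω) + K * a) μ :=
    (hx.const_mul _).add (integrable_const _)
  have hyoung := integral_dotProduct_mulVec_add_le hP hr (fun ω => hdrift (x ω)) hg hξ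
    (by simpa only [hdyn] using hx')
  have hnoise := integral_le_of_ae_condExp_le hm hvar
  rw [integral_add (hx.const_mul _) (integrable_const _), integral_const_mul] at hyoung
  simp only [← hdyn, integral_const, probReal_univ, one_smul] at hyoung
  have hσr : (1 + (√σ)⁻¹) * σ = σ + √σ := by
    rw [one_add_mul, inv_mul_eq_div, Real.div_sqrt]
  calc _ ≤ _ := hyoung
    _ ≤ _ := by rw [← hσr]; gcongr

lemma measureReal_sqrt_sum_sq_gt_le [IsFiniteMeasure μ] {c δ : ℝ} (hc : 0 < c) (hδ : 0 < δ)
    (hcP : ∀ v : ι → ℝ, c * ∑ i, v i ^ 2 ≤ v ⬝ᵥ P *ᵥ v) {x : Ω → ι → ℝ}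
    (hx : Integrable (fun ω => x ω ⬝ᵥ P *ᵥ x ω) μ) :
    μ.real {ω | √(∑ i, x ω i ^ 2) > δ} ≤ (∫ ω, x ω ⬝ᵥ P *ᵥ x ω ∂μ) / (c * δ ^ 2) := by
  have hsub : {ω | √(∑ i, x ω i ^ 2) > δ} ⊆ {ω | c * δ ^ 2 ≤ x ω ⬝ᵥ P *ᵥ x ω} := fun ω hω =>
    calc c * δ ^ 2 ≤ c * ∑ i, x ω i ^ 2 := by
          gcongr; exact ((Real.lt_sqrt hδ.le).1 hω).le
      _ ≤ _ := hcP (x ω)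
  have hnonneg : ∀ v : ι → ℝ, 0 ≤ v ⬝ᵥ P *ᵥ v := fun v =>
    (mul_nonneg hc.le (Finset.sum_nonneg fun i _ => sq_nonneg (v i))).trans (hcP v)
  rw [le_div_iff₀ (by positivity), mul_comm]
  exact (mul_le_mul_of_nonneg_left (measureReal_mono hsub) (by positivity)).trans
    (mul_meas_ge_le_integral_of_nonneg (.of_forall fun ω => hnonneg (x ω)) hx _)

end Probability

theorem no_model_collapse_general {Ω : Type*} {m0 : MeasurableSpace Ω}
    (μ : Measure Ω) [IsProbabilityMeasure μ]
    (F : MeasureTheory.Filtration ℕ m0)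
    (n : ℕ) (P : Matrix (Fin n) (Fin n) ℝ) (hP : P.PosDef)
    (A : (Fin n → ℝ) → Matrix (Fin n) (Fin n) ℝ)
    (c : (Fin n → ℝ) → ℝ)
    (f : ℝ → ℝ)
    (hfconv : ConvexOn ℝ (Set.Ici (0:ℝ)) f)
    (hf0 : f 0 = 0) (hfpos : ∀ r : ℝ, 0 < r → 0 < f r)
    (hcf : ∀ v : Fin n → ℝ, c v * (v ⬝ᵥ P.mulVec v) ≥ f (v ⬝ᵥ P.mulVec v))
    (e ξ : ℕ → Ω → (Fin n → ℝ))
    (hξmeas : ∀ t, Measurable (ξ t))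
    (hdyn : ∀ t ω, e (t + 1) ω = A (e t ω) *ᵥ e t ω + ξ t ω)
    (σsq : ℕ → ℝ) (hσpos : ∀ t, 0 < σsq t)
    (hσ0 : Filter.Tendsto σsq Filter.atTop (nhds 0))
    (hnoise_var : ∀ t, ∀ᵐ ω ∂μ,
      (μ[fun ω' => ξ t ω' ⬝ᵥ P.mulVec (ξ t ω') | F t]) ω ≤ σsq t)
    (hcontract : ∀ v x : Fin n → ℝ,
      (A v *ᵥ x) ⬝ᵥ P.mulVec (A v *ᵥ x) ≤ (1 - c v) * (x ⬝ᵥ P.mulVec x))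
    (hint : ∀ t, Integrable (fun ω => e t ω ⬝ᵥ P.mulVec (e t ω)) μ) :
    ∀ δ : ℝ, 0 < δ →
      Filter.limsup
        (fun t => (μ {ω | Real.sqrt (∑ i, e t ω i ^ 2) > δ}).toReal)
        Filter.atTop = 0 := by
  intro δ hδ
  have hV := hP.posSemidef.dotProduct_mulVec_self_nonneg
  have hw : Tendsto (fun t => ∫ ω, e t ω ⬝ᵥ P *ᵥ e t ω ∂μ) atTop (𝓝 0) := by
    refine tendsto_zero_of_perturbed_contraction (fun t => integral_nonneg fun ω => hV _)
      (by simpa using hσ0.sqrt) (by simpa using hσ0.add hσ0.sqrt) fun a ha => ?_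
    obtain ⟨K, hK0, hK1, hKf⟩ := hfconv.exists_mul_sub_le hf0 hfpos ha
    refine ⟨K, hK0, hK1, fun t => integral_lyapunov_succ_le (F.le t) hP.posSemidef
      (fun v => ?_) (hdyn t) (hξmeas t) (hσpos t) (hnoise_var t) (hint t) (hint (t + 1))⟩
    linarith [hcontract v v, hcf v, hKf _ (hV v)]
  obtain ⟨κ, hκ, hκP⟩ := hP.exists_pos_mul_sum_sq_le
  refine (tendsto_of_tendsto_of_tendsto_of_le_of_le tendsto_const_nhds
    (by simpa using hw.div_const (κ * δ ^ 2)) (fun t => ENNReal.toReal_nonneg)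
    fun t => measureReal_sqrt_sum_sq_gt_le hκ hδ hκP (hint t)).limsup_eq

/-- Main stability theorem: for the stochastic system `e_{t+1} = A(e_t) e_t + ξ_t` with
conditionally centered noise whose conditional second moment bound `σ_t² → 0`, a state
dependent contraction `A(v)ᵀ P A(v) ⪯ (1 - c(v)) P` with `c : ℝ^p → [0,1)` continuous,
and a convex rate function `f` with `f 0 = 0`, `f > 0` on `(0,∞)`, `c(e)V(e) ≥ f(V(e))`
for the Lyapunov function `V(e) = eᵀ P e`, the error vanishes in probability:
for every `δ > 0`, `limsup_{t→∞} P(‖e_t‖ > δ) = 0`. -/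
theorem no_model_collapse {Ω : Type*} {m0 : MeasurableSpace Ω}
    (μ : Measure Ω) [IsProbabilityMeasure μ]
    (F : MeasureTheory.Filtration ℕ m0)
    (n : ℕ) (P : Matrix (Fin n) (Fin n) ℝ) (hP : P.PosDef)
    (A : (Fin n → ℝ) → Matrix (Fin n) (Fin n) ℝ)
    (c : (Fin n → ℝ) → ℝ) (hccont : Continuous c)
    (hcrange : ∀ v, 0 ≤ c v ∧ c v < 1)
    (f : ℝ → ℝ)
    (hfconv : ConvexOn ℝ (Set.Ici (0:ℝ)) f)
    (hf0 : f 0 = 0) (hfpos : ∀ r : ℝ, 0 < r → 0 < f r)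
    (hcf : ∀ v : Fin n → ℝ, c v * (v ⬝ᵥ P.mulVec v) ≥ f (v ⬝ᵥ P.mulVec v))
    (e ξ : ℕ → Ω → (Fin n → ℝ))
    (hadapted : ∀ t, StronglyMeasurable[F t] (e t))
    (hξmeas : ∀ t, Measurable (ξ t))
    (hdyn : ∀ t ω, e (t + 1) ω = A (e t ω) *ᵥ e t ω + ξ t ω)
    (σsq : ℕ → ℝ) (hσpos : ∀ t, 0 < σsq t)
    (hσ0 : Filter.Tendsto σsq Filter.atTop (nhds 0))
    (hnoise_mean : ∀ t i, μ[fun ω => ξ t ω i | F t] =ᵐ[μ] 0)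
    (hnoise_var : ∀ t, ∀ᵐ ω ∂μ,
      (μ[fun ω' => ξ t ω' ⬝ᵥ P.mulVec (ξ t ω') | F t]) ω ≤ σsq t)
    (hcontract : ∀ v x : Fin n → ℝ,
      (A v *ᵥ x) ⬝ᵥ P.mulVec (A v *ᵥ x) ≤ (1 - c v) * (x ⬝ᵥ P.mulVec x))
    (hint : ∀ t, Integrable (fun ω => e t ω ⬝ᵥ P.mulVec (e t ω)) μ) :
    ∀ δ : ℝ, 0 < δ →
      Filter.limsup
        (fun t => (μ {ω | Real.sqrt (∑ i, e t ω i ^ 2) > δ}).toReal)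
        Filter.atTop = 0 :=
  no_model_collapse_general μ F n P hP A c f hfconv hf0 hfpos hcf e ξ hξmeas hdyn σsq hσpos hσ0
    hnoise_var hcontract hint
end
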